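/- In the call-by-value dual calculus, the defined but-not type A₀ ⊂ A₁ := A₀ ∧ ¬A₁ with term (M $ K) := (M, [K]not) and coterm λα.K := (x).(x • snd[ not⟨(α).(x • fst[K])⟩ ]) satisfies the β-law (W $ K₀) • (λα.K₁) =dcv ((α).(W • K₁)) • K₀ for every value W and coterms K₀, K₁. -/

import Mathlib

set_option autoImplicit true
set_option relaxedAutoImplicit true

namespace DC

mutual
/-- Terms of Wadler's dual calculus. -/
inductive Tm : Type
  | var : ℕ → Tm                  -- x
  | pair : Tm → Tm → Tm           -- (M,M)
  | inl : Tm → Tm                 -- ⟨M⟩inl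
  | inr : Tm → Tm                 -- ⟨M⟩inr
  | not : Co → Tm                 -- [K]not
  | bnd : ℕ → St → Tm             -- (α).S
deriving DecidableEq
/-- Coterms of the dual calculus. -/
inductive Co : Type
  | cov : ℕ → Co                  -- α
  | copair : Co → Co → Co         -- [K,K]
  | fst : Co → Co                 -- fst[K]
  | snd : Co → Co                 -- snd[K]
  | not : Tm → Co                 -- not⟨M⟩
  | bnd : ℕ → St → Co             -- (x).S
deriving DecidableEq
/-- Statements. -/
inductive St : Type
  | cut : Tm → Co → St            -- M • K
deriving DecidableEq
end

mutual
/-- Substitution [M/x] in terms. -/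
def substTmT (W : Tm) (x : ℕ) : Tm → Tm
  | .var y => if y = x then W else .var y
  | .pair M0 M1 => .pair (substTmT W x M0) (substTmT W x M1)
  | .inl M => .inl (substTmT W x M)
  | .inr M => .inr (substTmT W x M)
  | .not K => .not (substTmC W x K)
  | .bnd a S => .bnd a (substTmS W x S)
/-- Substitution [M/x] in coterms. -/
def substTmC (W : Tm) (x : ℕ) : Co → Co
  | .cov a => .cov a
  | .copair K0 K1 => .copair (substTmC W x K0) (substTmC W x K1)
  | .fst K => .fst (substTmC W x K)
  | .snd K => .snd (substTmC W x K)
  | .not M => .not (substTmT W x M)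
  | .bnd y S => if y = x then .bnd y S else .bnd y (substTmS W x S)
/-- Substitution [M/x] in statements. -/
def substTmS (W : Tm) (x : ℕ) : St → St
  | .cut M K => .cut (substTmT W x M) (substTmC W x K)
end

mutual
/-- Substitution [K/α] in terms. -/
def substCoT (L : Co) (a : ℕ) : Tm → Tm
  | .var y => .var y
  | .pair M0 M1 => .pair (substCoT L a M0) (substCoT L a M1)
  | .inl M => .inl (substCoT L a M)
  | .inr M => .inr (substCoT L a M)
  | .not K => .not (substCoC L a K)
  | .bnd b S => if b = a then .bnd b S else .bnd b (substCoS L a S)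
/-- Substitution [K/α] in coterms. -/
def substCoC (L : Co) (a : ℕ) : Co → Co
  | .cov b => if b = a then L else .cov b
  | .copair K0 K1 => .copair (substCoC L a K0) (substCoC L a K1)
  | .fst K => .fst (substCoC L a K)
  | .snd K => .snd (substCoC L a K)
  | .not M => .not (substCoT L a M)
  | .bnd y S => .bnd y (substCoS L a S)
/-- Substitution [K/α] in statements. -/
def substCoS (L : Co) (a : ℕ) : St → St
  | .cut M K => .cut (substCoT L a M) (substCoC L a K)
end

mutual
/-- Free term variables of a term. -/
def ftvT : Tm → Finset ℕ
  | .var x => {x}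
  | .pair M0 M1 => ftvT M0 ∪ ftvT M1
  | .inl M => ftvT M
  | .inr M => ftvT M
  | .not K => ftvC K
  | .bnd _ S => ftvS S
/-- Free term variables of a coterm. -/
def ftvC : Co → Finset ℕ
  | .cov _ => ∅
  | .copair K0 K1 => ftvC K0 ∪ ftvC K1
  | .fst K => ftvC K
  | .snd K => ftvC K
  | .not M => ftvT M
  | .bnd x S => ftvS S \ {x}
/-- Free term variables of a statement. -/
def ftvS : St → Finset ℕ
  | .cut M K => ftvT M ∪ ftvC K
end

mutual
/-- Free covariables of a term. -/
def fcvT : Tm → Finset ℕ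
  | .var _ => ∅
  | .pair M0 M1 => fcvT M0 ∪ fcvT M1
  | .inl M => fcvT M
  | .inr M => fcvT M
  | .not K => fcvC K
  | .bnd a S => fcvS S \ {a}
/-- Free covariables of a coterm. -/
def fcvC : Co → Finset ℕ
  | .cov a => {a}
  | .copair K0 K1 => fcvC K0 ∪ fcvC K1
  | .fst K => fcvC K
  | .snd K => fcvC K
  | .not M => fcvT M
  | .bnd _ S => fcvS S
/-- Free covariables of a statement. -/
def fcvS : St → Finset ℕ
  | .cut M K => fcvT M ∪ fcvC K
end

/-- Values of the call-by-value dual calculus. -/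
inductive IsVal : Tm → Prop
  | var {x} : IsVal (.var x)
  | pair {W0 W1} : IsVal W0 → IsVal W1 → IsVal (.pair W0 W1)
  | inl {W} : IsVal W → IsVal (.inl W)
  | inr {W} : IsVal W → IsVal (.inr W)
  | not {K} : IsVal (.not K)
  | bndFst {W a} : IsVal W → IsVal (.bnd a (.cut W (.fst (.cov a))))
  | bndSnd {W a} : IsVal W → IsVal (.bnd a (.cut W (.snd (.cov a))))

/-- Call-by-value evaluation contexts. -/
inductive ECtx : Type
  | hole : ECtx
  | pairL : ECtx → Tm → ECtx
  | pairR : Tm → ECtx → ECtx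
  | inl : ECtx → ECtx
  | inr : ECtx → ECtx

/-- Filling the hole of an evaluation context. -/
def ECtx.fill : ECtx → Tm → Tm
  | .hole, M => M
  | .pairL c M1, M => .pair (c.fill M) M1
  | .pairR W c, M => .pair W (c.fill M)
  | .inl c, M => .inl (c.fill M)
  | .inr c, M => .inr (c.fill M)

/-- Well-formed evaluation contexts: the left component of `pairR` is a value. -/
inductive ECtx.OK : ECtx → Prop
  | hole : ECtx.OK .hole
  | pairL {c M} : ECtx.OK c → ECtx.OK (.pairL c M)
  | pairR {W c} : IsVal W → ECtx.OK c → ECtx.OK (.pairR W c)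
  | inl {c} : ECtx.OK c → ECtx.OK (.inl c)
  | inr {c} : ECtx.OK c → ECtx.OK (.inr c)

mutual
/-- Call-by-value equality =dcv of the dual calculus, on terms. -/
inductive EqT : Tm → Tm → Prop
  | refl (M) : EqT M M
  | symm {M0 M1} : EqT M0 M1 → EqT M1 M0
  | trans {M0 M1 M2} : EqT M0 M1 → EqT M1 M2 → EqT M0 M2
  | pairCong {M0 M0' M1 M1'} : EqT M0 M0' → EqT M1 M1' → EqT (.pair M0 M1) (.pair M0' M1')
  | inlCong {M M'} : EqT M M' → EqT (.inl M) (.inl M')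
  | inrCong {M M'} : EqT M M' → EqT (.inr M) (.inr M')
  | notCong {K K'} : EqK K K' → EqT (.not K) (.not K')
  | bndCong {a S S'} : EqS S S' → EqT (.bnd a S) (.bnd a S')
  | etaR {a M} : a ∉ fcvT M → EqT (.bnd a (.cut M (.cov a))) M
  | etaAnd {a W} : IsVal W → a ∉ fcvT W →
      EqT (.pair (.bnd a (.cut W (.fst (.cov a)))) (.bnd a (.cut W (.snd (.cov a))))) W
  | etaNot {x W} : IsVal W → x ∉ ftvT W →
      EqT (.not (.bnd x (.cut W (.not (.var x))))) W
/-- Call-by-value equality =dcv on coterms. -/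
inductive EqK : Co → Co → Prop
  | refl (K) : EqK K K
  | symm {K0 K1} : EqK K0 K1 → EqK K1 K0
  | trans {K0 K1 K2} : EqK K0 K1 → EqK K1 K2 → EqK K0 K2
  | copairCong {K0 K0' K1 K1'} : EqK K0 K0' → EqK K1 K1' → EqK (.copair K0 K1) (.copair K0' K1')
  | fstCong {K K'} : EqK K K' → EqK (.fst K) (.fst K')
  | sndCong {K K'} : EqK K K' → EqK (.snd K) (.snd K')
  | notCong {M M'} : EqT M M' → EqK (.not M) (.not M')
  | bndCong {x S S'} : EqS S S' → EqK (.bnd x S) (.bnd x S')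
  | etaL {x K} : x ∉ ftvC K → EqK (.bnd x (.cut (.var x) K)) K
  | etaOr {x K} : x ∉ ftvC K →
      EqK (.copair (.bnd x (.cut (.inl (.var x)) K)) (.bnd x (.cut (.inr (.var x)) K))) K
/-- Call-by-value equality =dcv on statements. -/
inductive EqS : St → St → Prop
  | refl (S) : EqS S S
  | symm {S0 S1} : EqS S0 S1 → EqS S1 S0
  | trans {S0 S1 S2} : EqS S0 S1 → EqS S1 S2 → EqS S0 S2
  | cutCong {M M' K K'} : EqT M M' → EqK K K' → EqS (.cut M K) (.cut M' K')
  | betaAnd0 {W0 W1 K} : IsVal W0 → IsVal W1 →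
      EqS (.cut (.pair W0 W1) (.fst K)) (.cut W0 K)
  | betaAnd1 {W0 W1 K} : IsVal W0 → IsVal W1 →
      EqS (.cut (.pair W0 W1) (.snd K)) (.cut W1 K)
  | betaOr0 {W K0 K1} : IsVal W →
      EqS (.cut (.inl W) (.copair K0 K1)) (.cut W K0)
  | betaOr1 {W K0 K1} : IsVal W →
      EqS (.cut (.inr W) (.copair K0 K1)) (.cut W K1)
  | betaNot {K M} : EqS (.cut (.not K) (.not M)) (.cut M K)
  | betaR {W x S} : IsVal W → EqS (.cut W (.bnd x S)) (substTmS W x S)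
  | betaL {a S K} : EqS (.cut (.bnd a S) K) (substCoS K a S)
  | zeta {ec M K x} : ECtx.OK ec → x ∉ ftvT (ec.fill M) → x ∉ ftvC K →
      EqS (.cut (ec.fill M) K) (.cut M (.bnd x (.cut (ec.fill (.var x)) K)))
end

/-- The defined but-not term M $ K := (M, [K]not). -/
def dollar (M : Tm) (K : Co) : Tm := .pair M (.not K)

/-- The defined but-not coterm λα.K := (x).(x • snd[not⟨(α).(x • fst[K])⟩]),
with a chosen fresh variable x. -/
def dcoabs (a x : ℕ) (K : Co) : Co :=
  .bnd x (.cut (.var x) (.snd (.not (.bnd a (.cut (.var x) (.fst K))))))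

mutual
theorem substTmT_eq_self_of_notMem (W : Tm) (x : ℕ) :
    ∀ M : Tm, x ∉ ftvT M → substTmT W x M = M
  | .var y, h => by
      simp only [ftvT, Finset.mem_singleton] at h
      simp [substTmT, Ne.symm h]
  | .pair M0 M1, h => by
      simp only [ftvT, Finset.mem_union, not_or] at h
      rw [substTmT, substTmT_eq_self_of_notMem W x M0 h.1, substTmT_eq_self_of_notMem W x M1 h.2]
  | .inl M, h => by rw [substTmT, substTmT_eq_self_of_notMem W x M h]
  | .inr M, h => by rw [substTmT, substTmT_eq_self_of_notMem W x M h]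
  | .not K, h => by rw [substTmT, substTmC_eq_self_of_notMem W x K h]
  | .bnd a S, h => by rw [substTmT, substTmS_eq_self_of_notMem W x S h]
theorem substTmC_eq_self_of_notMem (W : Tm) (x : ℕ) :
    ∀ K : Co, x ∉ ftvC K → substTmC W x K = K
  | .cov _, _ => rfl
  | .copair K0 K1, h => by
      simp only [ftvC, Finset.mem_union, not_or] at h
      rw [substTmC, substTmC_eq_self_of_notMem W x K0 h.1, substTmC_eq_self_of_notMem W x K1 h.2]
  | .fst K, h => by rw [substTmC, substTmC_eq_self_of_notMem W x K h]
  | .snd K, h => by rw [substTmC, substTmC_eq_self_of_notMem W x K h]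
  | .not M, h => by rw [substTmC, substTmT_eq_self_of_notMem W x M h]
  | .bnd y S, h => by
      by_cases hy : y = x
      · simp [substTmC, hy]
      · simp only [ftvC, Finset.mem_sdiff, Finset.mem_singleton, not_and, not_not] at h
        have hS : x ∉ ftvS S := fun hs => hy (h hs).symm
        simp [substTmC, hy, substTmS_eq_self_of_notMem W x S hS]
theorem substTmS_eq_self_of_notMem (W : Tm) (x : ℕ) :
    ∀ S : St, x ∉ ftvS S → substTmS W x S = S
  | .cut M K, h => by
      simp only [ftvS, Finset.mem_union, not_or] at h
      rw [substTmS, substTmT_eq_self_of_notMem W x M h.1, substTmC_eq_self_of_notMem W x K h.2]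
end

instance : Trans EqS EqS EqS := ⟨EqS.trans⟩

theorem IsVal.dollar {W : Tm} (hW : IsVal W) (K : Co) : IsVal (dollar W K) := .pair hW .not

theorem cut_dcoabs {V : Tm} (hV : IsVal V) (a : ℕ) {x : ℕ} {K : Co} (hx : x ∉ ftvC K) :
    EqS (.cut V (dcoabs a x K)) (.cut V (.snd (.not (.bnd a (.cut V (.fst K)))))) := by
  have := EqS.betaR (x := x) (S := .cut (.var x) (.snd (.not (.bnd a (.cut (.var x) (.fst K)))))) hV
  simpa only [dcoabs, substTmS, substTmT, substTmC, ite_true,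
    substTmC_eq_self_of_notMem V x K hx] using this

/-- Proposition (β←) for the defined but-not connective of the call-by-value
dual calculus: (W $ K₀) • (λα.K₁) =dcv ((α).(W • K₁)) • K₀ for every value W. -/
theorem beta_bnot (W : Tm) (K0 K1 : Co) (a x : ℕ)
    (hW : IsVal W) (hx : x ∉ ftvC K1) (ha : a ∉ fcvT W) :
    EqS (.cut (dollar W K0) (dcoabs a x K1)) (.cut (.bnd a (.cut W K1)) K0) :=
  calc EqS (.cut (dollar W K0) (dcoabs a x K1))
        (.cut (dollar W K0) (.snd (.not (.bnd a (.cut (dollar W K0) (.fst K1)))))) :=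
        cut_dcoabs (hW.dollar K0) a hx
    EqS _ (.cut (.not K0) (.not (.bnd a (.cut (dollar W K0) (.fst K1))))) := .betaAnd1 hW .not
    EqS _ (.cut (.bnd a (.cut (dollar W K0) (.fst K1))) K0) := .betaNot
    EqS _ (.cut (.bnd a (.cut W K1)) K0) := .cutCong (.bndCong (.betaAnd0 hW .not)) (.refl K0)

end DC
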